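/- arXiv:1201.3955 — 5 statements merged into one kernel-verified Lean document; each statement's English description precedes it below -/
import Mathlib

section
/- The tree function satisfies T(1/e) = 1, where T(z) = Σ_{k≥1} k^{k-1} z^k / k! and T satisfies the functional equation T(z) = z·e^{T(z)} on [0, 1/e]. -/
open Real

/-- The tree function `T(z) = Σ_{k≥1} k^{k-1} z^k / k!`. -/
noncomputable def treeFun (z : ℝ) : ℝ :=
  ∑' k : ℕ, ((k + 1 : ℕ) : ℝ) ^ k * z ^ (k + 1) / ((k + 1).factorial : ℝ)

/-!
With `a k = k^(k-1)/k!`, the coefficient of `tⁿ` in the double series `Σ_k a k tᵏ e^{-kt}` is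
`Σ_{k+m=n} a k (-k)^m/m! = (1/n!) Σ_k (-1)^(n-k) C(n,k) k^(n-1)`, an `n`-th finite difference of a
polynomial of degree `n-1`, hence zero for `n ≥ 2`. So `T(t e^{-t}) = t` for small `t > 0`, where
the double series converges absolutely, and then `T z = z e^{T z}` at the points `z = t e^{-t}`.
These accumulate at `0`, so by the identity theorem the functional equation holds on the whole
disc of convergence `|z| < 1/e`, and, as `T` is continuous up to `1/e` (Stirling), also at `1/e`.
There `x = T(1/e)` solves `x = e^{x-1}`, whose only real solution is `x = 1`.
-/

open Filter Topology Finset Set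

open scoped Nat

noncomputable def treeCoeff : ℕ → ℝ
  | 0 => 0
  | k + 1 => ((k + 1 : ℕ) : ℝ) ^ k / (k + 1)!

lemma treeCoeff_nonneg (k : ℕ) : 0 ≤ treeCoeff k := by
  cases k <;> simp only [treeCoeff] <;> positivity

lemma treeFun_eq_tsum (z : ℝ) : treeFun z = ∑' k, treeCoeff k * z ^ k := by
  have hsupp : (Function.support fun k => treeCoeff k * z ^ k) ⊆ Set.range Nat.succ := by
    rintro (_ | k) hk
    · simp [treeCoeff] at hk
    · exact ⟨k, rfl⟩
  rw [← Nat.succ_injective.tsum_eq hsupp]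
  exact tsum_congr fun k => mul_div_right_comm _ _ _

lemma treeCoeff_mul_pow_le {k : ℕ} (hk : k ≠ 0) {r : ℝ} (hr0 : 0 ≤ r) (hr : r ≤ (exp 1)⁻¹) :
    treeCoeff k * r ^ k ≤ ((k : ℝ) * √k)⁻¹ := by
  obtain ⟨j, rfl⟩ := Nat.exists_eq_succ_of_ne_zero hk
  set n : ℝ := ((j + 1 : ℕ) : ℝ)
  have hn : 0 < n := by positivity
  have hstirling : √n * (n / exp 1) ^ (j + 1) ≤ (j + 1)! := by
    refine le_trans ?_ (Stirling.le_factorial_stirling (j + 1))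
    gcongr
    nlinarith [pi_gt_three]
  calc treeCoeff (j + 1) * r ^ (j + 1)
      ≤ n ^ j / (√n * (n / exp 1) ^ (j + 1)) * (exp 1)⁻¹ ^ (j + 1) := by
        simp only [treeCoeff]
        gcongr
    _ = (n * √n)⁻¹ := by
        rw [div_pow, inv_pow, pow_succ]
        field_simp

lemma summable_inv_mul_sqrt : Summable fun k : ℕ => ((k : ℝ) * √k)⁻¹ := by
  refine (Real.summable_nat_rpow_inv.mpr (by norm_num : (1 : ℝ) < 3 / 2)).congr fun k => ?_
  rw [show (3 / 2 : ℝ) = 1 + 1 / 2 by norm_num, rpow_add' (Nat.cast_nonneg k) (by norm_num),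
    rpow_one, ← sqrt_eq_rpow]

lemma summable_treeCoeff_mul_pow {r : ℝ} (hr0 : 0 ≤ r) (hr : r ≤ (exp 1)⁻¹) :
    Summable fun k => treeCoeff k * r ^ k := by
  refine summable_inv_mul_sqrt.of_nonneg_of_le
    (fun k => mul_nonneg (treeCoeff_nonneg k) (pow_nonneg hr0 k)) fun k => ?_
  rcases eq_or_ne k 0 with rfl | hk
  · simp [treeCoeff]
  · exact treeCoeff_mul_pow_le hk hr0 hr

noncomputable def treeSeries : FormalMultilinearSeries ℝ ℝ ℝ :=
  FormalMultilinearSeries.ofScalars ℝ treeCoeff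

lemma treeSeries_sum : treeSeries.sum = treeFun := by
  ext z
  rw [treeFun_eq_tsum, FormalMultilinearSeries.sum]
  exact tsum_congr fun k => FormalMultilinearSeries.ofScalars_apply_eq treeCoeff z k

lemma inv_exp_one_le_radius_treeSeries : ENNReal.ofReal (exp 1)⁻¹ ≤ treeSeries.radius := by
  rw [ENNReal.ofReal]
  refine treeSeries.le_radius_of_summable ((summable_treeCoeff_mul_pow (r := (exp 1)⁻¹)
    (by positivity) le_rfl).congr fun k => ?_)
  rw [treeSeries, FormalMultilinearSeries.ofScalars_norm, norm_of_nonneg (treeCoeff_nonneg k),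
    Real.coe_toNNReal _ (by positivity)]

lemma analyticOnNhd_treeFun : AnalyticOnNhd ℝ treeFun (Metric.ball 0 (exp 1)⁻¹) := by
  have hpos : 0 < ENNReal.ofReal (exp 1)⁻¹ := ENNReal.ofReal_pos.mpr (by positivity)
  rw [← Metric.eball_ofReal, ← treeSeries_sum]
  exact ((treeSeries.hasFPowerSeriesOnBall (hpos.trans_le inv_exp_one_le_radius_treeSeries)).mono
    hpos inv_exp_one_le_radius_treeSeries).analyticOnNhd

lemma continuousOn_treeFun : ContinuousOn treeFun (Icc 0 (exp 1)⁻¹) := by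
  simp_rw [funext treeFun_eq_tsum]
  refine continuousOn_tsum (fun k => (continuous_const.mul (continuous_pow k)).continuousOn)
    (summable_treeCoeff_mul_pow (by positivity) le_rfl) fun k z hz => ?_
  rw [norm_mul, norm_pow, norm_of_nonneg (treeCoeff_nonneg k), norm_of_nonneg hz.1]
  exact mul_le_mul_of_nonneg_left (pow_le_pow_left₀ hz.1 hz.2 k) (treeCoeff_nonneg k)

theorem sum_range_neg_one_pow_mul_choose_mul_pow_eq_zero {R : Type*} [CommRing R] {d n : ℕ}
    (h : d < n) : ∑ k ∈ range (n + 1), (-1 : R) ^ (n - k) * n.choose k * (k : R) ^ d = 0 := by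
  have := fwdDiff_iter_eq_sum_shift (1 : R) (fun x : R => x ^ d) n 0
  rw [fwdDiff_iter_pow_eq_zero_of_lt h] at this
  simpa [zsmul_eq_mul, eq_comm] using this

lemma treeCoeff_mul_neg_pow_div_factorial {k m n : ℕ} (h : k + m = n) (hn : 2 ≤ n) :
    treeCoeff k * (-(k : ℝ)) ^ m / m ! = (-1) ^ m * n.choose k * (k : ℝ) ^ (n - 1) / n ! := by
  subst h
  rcases k with _ | j
  · simp [treeCoeff, zero_pow (by omega : m - 1 ≠ 0)]
  · rw [Nat.cast_choose ℝ (by omega), Nat.add_sub_cancel_left, treeCoeff, neg_pow,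
      show j + 1 + m - 1 = j + m by omega, pow_add]
    field_simp

lemma sum_antidiagonal_treeCoeff_mul_neg_pow_div_factorial (n : ℕ) :
    ∑ p ∈ antidiagonal n, treeCoeff p.1 * (-(p.1 : ℝ)) ^ p.2 / p.2 ! = if n = 1 then 1 else 0 := by
  match n with
  | 0 => simp [treeCoeff]
  | 1 => simp [Finset.Nat.antidiagonal_succ, treeCoeff]
  | n + 2 =>
    rw [Finset.Nat.sum_antidiagonal_eq_sum_range_succ_mk, if_neg (by omega), sum_congr rfl fun k hk => treeCoeff_mul_neg_pow_div_factorial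
      (Nat.add_sub_of_le (mem_range_succ_iff.mp hk)) le_add_self, ← sum_div,
      sum_range_neg_one_pow_mul_choose_mul_pow_eq_zero (by omega), zero_div]

theorem tsum_prod_eq_tsum_sum_antidiagonal {A α : Type*} [AddCommMonoid A] [HasAntidiagonal A]
    [AddCommMonoid α] [TopologicalSpace α] [ContinuousAdd α] [T3Space α] {f : A × A → α}
    (hf : Summable f) : ∑' p, f p = ∑' n, ∑ p ∈ antidiagonal n, f p := by
  let e := HasAntidiagonal.sigmaAntidiagonalEquivProd (A := A)
  have he : Summable fun c => f (e c) := e.summable_iff.mpr hf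
  rw [← e.tsum_eq f, he.tsum_sigma' fun n => (hasSum_fintype _).summable]
  exact tsum_congr fun n => Finset.tsum_subtype _ f

lemma hasSum_pow_div_factorial (x : ℝ) : HasSum (fun m => x ^ m / m !) (exp x) := by
  rw [exp_eq_exp_ℝ]
  exact NormedSpace.expSeries_div_hasSum_exp x

lemma treeFun_mul_exp_neg {t : ℝ} (ht : 0 ≤ t) (hte : t * exp t ≤ (exp 1)⁻¹) :
    treeFun (t * exp (-t)) = t := by
  set F : ℕ × ℕ → ℝ := fun p => treeCoeff p.1 * t ^ p.1 * ((-(p.1 : ℝ) * t) ^ p.2 / p.2 !)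
  have hrow : ∀ k, HasSum (fun m => F (k, m)) (treeCoeff k * (t * exp (-t)) ^ k) := fun k => by
    rw [mul_pow, ← exp_nat_mul, ← mul_assoc, show (k : ℝ) * -t = -k * t by ring]
    exact (hasSum_pow_div_factorial _).mul_left _
  have habs_row : ∀ k, HasSum (fun m => |F (k, m)|) (treeCoeff k * (t * exp t) ^ k) := fun k => by
    simp only [F, abs_mul, abs_div, abs_pow, abs_neg, Nat.abs_cast, abs_of_nonneg ht,
      abs_of_nonneg (treeCoeff_nonneg k)]
    rw [mul_pow, ← exp_nat_mul, ← mul_assoc]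
    exact (hasSum_pow_div_factorial _).mul_left _
  have hF : Summable F := by
    refine Summable.of_abs ((summable_prod_of_nonneg fun _ => abs_nonneg _).mpr
      ⟨fun k => (habs_row k).summable, ?_⟩)
    simp_rw [fun k => (habs_row k).tsum_eq]
    exact summable_treeCoeff_mul_pow (by positivity) hte
  have hdiag : ∀ n, ∑ p ∈ antidiagonal n, F p = if n = 1 then t else 0 := fun n => by
    have hterm : ∀ p ∈ antidiagonal n,
        F p = treeCoeff p.1 * (-(p.1 : ℝ)) ^ p.2 / p.2 ! * t ^ n := by
      rintro ⟨k, m⟩ hkm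
      rw [← mem_antidiagonal.mp hkm]
      simp only [F]
      ring
    rw [sum_congr rfl hterm, ← sum_mul, sum_antidiagonal_treeCoeff_mul_neg_pow_div_factorial]
    split_ifs with h <;> simp [h]
  calc treeFun (t * exp (-t)) = ∑' k, ∑' m, F (k, m) := by
        rw [treeFun_eq_tsum]
        exact tsum_congr fun k => (hrow k).tsum_eq.symm
    _ = ∑' p, F p := (hF.tsum_prod' fun k => (hrow k).summable).symm
    _ = ∑' n, ∑ p ∈ antidiagonal n, F p := tsum_prod_eq_tsum_sum_antidiagonal hF
    _ = t := by simp_rw [hdiag, tsum_ite_eq]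

lemma tendsto_mul_exp_neg_nhdsGT_zero :
    Tendsto (fun t : ℝ => t * exp (-t)) (𝓝[>] 0) (𝓝[≠] 0) := by
  refine tendsto_nhdsWithin_of_tendsto_nhds_of_eventually_within _ ?_ ?_
  · have hcont : Continuous fun t : ℝ => t * exp (-t) := by fun_prop
    simpa using (hcont.tendsto 0).mono_left nhdsWithin_le_nhds
  · filter_upwards [self_mem_nhdsWithin] with t (ht : 0 < t)
    exact (mul_pos ht (exp_pos _)).ne'

lemma treeFun_eq_mul_exp_treeFun_of_mem_ball {z : ℝ} (hz : z ∈ Metric.ball 0 (exp 1)⁻¹) :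
    treeFun z = z * exp (treeFun z) := by
  have hT := analyticOnNhd_treeFun
  refine hT.eqOn_of_preconnected_of_frequently_eq (analyticOnNhd_id.mul hT.rexp)
    (convex_ball _ _).isPreconnected (Metric.mem_ball_self (by positivity)) ?_ hz
  refine tendsto_mul_exp_neg_nhdsGT_zero.frequently (Eventually.frequently ?_)
  have hsmall : ∀ᶠ t in 𝓝 (0 : ℝ), t * exp t < (exp 1)⁻¹ :=
    (continuous_id.mul continuous_exp).continuousAt.eventually_lt continuousAt_const
      (by simpa using inv_pos.mpr (exp_pos 1))
  filter_upwards [nhdsWithin_le_nhds hsmall, self_mem_nhdsWithin] with t hte (ht : 0 < t)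
  rw [treeFun_mul_exp_neg ht.le hte.le, mul_assoc, ← exp_add, neg_add_cancel, exp_zero, mul_one]

lemma treeFun_eq_mul_exp_treeFun_of_mem_Icc :
    EqOn treeFun (fun z => z * exp (treeFun z)) (Icc 0 (exp 1)⁻¹) := by
  have hpos : (0 : ℝ) < (exp 1)⁻¹ := by positivity
  refine EqOn.of_subset_closure (s := Ico 0 (exp 1)⁻¹) (fun z hz => ?_) continuousOn_treeFun
    (continuousOn_id.mul continuousOn_treeFun.rexp) Ico_subset_Icc_self
    (closure_Ico hpos.ne).superset
  refine treeFun_eq_mul_exp_treeFun_of_mem_ball ?_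
  rw [Metric.mem_ball, dist_zero_right, norm_of_nonneg hz.1]
  exact hz.2

lemma eq_one_of_eq_exp_sub_one {x : ℝ} (h : x = exp (x - 1)) : x = 1 := by
  by_contra hx
  linarith [add_one_lt_exp (sub_ne_zero.mpr hx)]

/-- The tree function satisfies the functional equation `T(z) = z e^{T(z)}` on `[0, 1/e]`,
and `T(1/e) = 1`. -/
theorem treeFun_at_inv_e :
    (∀ z ∈ Set.Icc (0 : ℝ) (1 / Real.exp 1), treeFun z = z * Real.exp (treeFun z)) ∧
    treeFun (1 / Real.exp 1) = 1 := by
  rw [one_div]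
  refine ⟨fun z hz => treeFun_eq_mul_exp_treeFun_of_mem_Icc hz, ?_⟩
  apply eq_one_of_eq_exp_sub_one
  rw [exp_sub, div_eq_inv_mul]
  exact treeFun_eq_mul_exp_treeFun_of_mem_Icc (right_mem_Icc.mpr (by positivity))
end

section
/- For every 2 ≤ k ≤ n and 0 ≤ c₁ ≤ c₂, the expected number of directed k-cycles (in the complete graph on n vertices with i.i.d. mean-1 exponential edge weights) whose total weight lies in (c₁·k/n, c₂·k/n] is at most (c₂^k − c₁^k)·k^k/(k·k!). -/
open MeasureTheory ProbabilityTheory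
open scoped Classical

/-- The weight of the directed cycle through `f 0, f 1, …, f (k-1), f 0` with arc
weights `w`. -/
def cycleWeight {n k : ℕ} (w : Fin n → Fin n → ℝ) (f : Fin k → Fin n) : ℝ :=
  ∑ i : Fin k, w (f i) (f ⟨(i.1 + 1) % k, Nat.mod_lt _ i.pos⟩)

/-- The number of directed `k`-cycles whose weight lies in `(c₁ k/n, c₂ k/n]`:
each cycle corresponds to exactly `k` injective tuples (its rotations). -/
noncomputable def cycleCountIn (n k : ℕ) (w : Fin n → Fin n → ℝ) (c₁ c₂ : ℝ) : ℝ :=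
  (1 / (k : ℝ)) * ∑ f ∈ Finset.univ.filter (fun f : Fin k → Fin n => Function.Injective f),
    (if c₁ * k / n < cycleWeight w f ∧ cycleWeight w f ≤ c₂ * k / n then (1 : ℝ) else 0)

/-! A fixed `k`-cycle uses `k` distinct arcs, so its weight is a sum of `k` independent `Exp(1)`
variables, each with density at most `1` on `[0, ∞)`. By induction on the number `M` of
summands, `P(a < S_M ≤ b) ≤ V_M(b) - V_M(a)`, where `V_M(t) = t₊^M / M!` is the volume of the
simplex `{x ∈ [0, ∞)^M | ∑ x ≤ t}`: conditioning on one summand `x` and integrating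
`V_M(t - x)` over `x ≥ 0` gives `V_{M+1}(t)`. There are at most `n^k` injective tuples, each
cycle is counted `k` times, and `V_k(c k / n) = c^k k^k / (n^k k!)`. -/

open Set Function

noncomputable def simplexVolume (M : ℕ) (t : ℝ) : ℝ := max t 0 ^ M / M.factorial

lemma simplexVolume_mono (M : ℕ) : Monotone (simplexVolume M) := fun _ _ h =>
  div_le_div_of_nonneg_right (pow_le_pow_left₀ (le_max_right _ _) (max_le_max_right 0 h) M)
    (Nat.cast_nonneg _)

lemma simplexVolume_of_nonpos {M : ℕ} (hM : M ≠ 0) {t : ℝ} (ht : t ≤ 0) :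
    simplexVolume M t = 0 := by
  simp [simplexVolume, max_eq_right ht, zero_pow hM]

lemma continuous_simplexVolume (M : ℕ) : Continuous (simplexVolume M) := by
  unfold simplexVolume; fun_prop

lemma simplexVolume_sub_eq_zero_of_mem_Ici_diff {M : ℕ} (hM : M ≠ 0) {c x : ℝ}
    (hx : x ∈ Ici 0 \ Icc 0 (max c 0)) : simplexVolume M (c - x) = 0 := by
  obtain ⟨hx0, hxc⟩ := hx
  simp only [mem_Ici, mem_Icc, not_and, not_le] at hx0 hxc
  exact simplexVolume_of_nonpos hM (by linarith [hxc hx0, le_max_left c 0])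

lemma integrableOn_Ici_simplexVolume_sub {M : ℕ} (hM : M ≠ 0) (c : ℝ) :
    IntegrableOn (fun x => simplexVolume M (c - x)) (Ici 0) :=
  ((continuous_simplexVolume M).comp (continuous_sub_left c)).integrableOn_Icc
    (a := 0) (b := max c 0) |>.of_forall_sdiff_eq_zero measurableSet_Ici fun _ hx =>
      simplexVolume_sub_eq_zero_of_mem_Ici_diff hM hx

lemma integral_Ici_simplexVolume_sub {M : ℕ} (hM : M ≠ 0) (c : ℝ) :
    ∫ x in Ici 0, simplexVolume M (c - x) = simplexVolume (M + 1) c := by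
  set d := max c 0
  have hd : 0 ≤ d := le_max_right c 0
  have hvanish : ∀ x ∈ Ici (0 : ℝ) \ Icc 0 d, simplexVolume M (c - x) = 0 := fun _ hx =>
    simplexVolume_sub_eq_zero_of_mem_Ici_diff hM hx
  have hcongr : EqOn (fun x => simplexVolume M (c - x)) (fun x => (d - x) ^ M / M.factorial)
      (uIcc 0 d) := by
    intro x hx
    rw [uIcc_of_le hd] at hx
    have hmax : max (c - x) 0 = d - x := by
      rcases le_total c 0 with hc | hc
      · have hx0 : x = 0 := by simp_all [d]
        simp [d, hx0, hc]
      · simp_all [d]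
    simp only [simplexVolume, hmax]
  rw [setIntegral_eq_of_subset_of_forall_sdiff_eq_zero measurableSet_Ici Icc_subset_Ici_self
    hvanish, integral_Icc_eq_integral_Ioc, ← intervalIntegral.integral_of_le hd,
    intervalIntegral.integral_congr hcongr, intervalIntegral.integral_div,
    intervalIntegral.integral_comp_sub_left (fun x => x ^ M), integral_pow]
  simp only [simplexVolume, Nat.factorial_succ, Nat.cast_mul, sub_self, sub_zero]
  field_simp
  push_cast
  ring

section

variable {Ω : Type*} [MeasurableSpace Ω] {μ : Measure Ω}

lemma map_eq_expMeasure_of_tail [IsProbabilityMeasure μ] {X : Ω → ℝ} (hX : Measurable X)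
    (htail : ∀ x : ℝ, 0 ≤ x → μ {ω | x < X ω} = ENNReal.ofReal (Real.exp (-x))) :
    μ.map X = expMeasure 1 := by
  have := isProbabilityMeasure_expMeasure zero_lt_one
  have := Measure.isProbabilityMeasure_map (μ := μ) hX.aemeasurable
  have hcdf : ∀ t, 0 ≤ t → μ.real (X ⁻¹' Iic t) = 1 - Real.exp (-t) := fun t ht => by
    have hcompl : X ⁻¹' Iic t = {ω | t < X ω}ᶜ := by ext; simp
    rw [hcompl, probReal_compl_eq_one_sub (measurableSet_lt measurable_const hX), measureReal_def,
      htail t ht, ENNReal.toReal_ofReal (Real.exp_pos _).le]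
  refine Measure.eq_of_cdf _ _ (StieltjesFunction.ext fun t => ?_)
  rw [cdf_eq_real, map_measureReal_apply hX measurableSet_Iic, cdf_expMeasure_eq zero_lt_one,
    one_mul]
  split_ifs with ht
  · exact hcdf t ht
  · refine le_antisymm ?_ measureReal_nonneg
    calc μ.real (X ⁻¹' Iic t) ≤ μ.real (X ⁻¹' Iic 0) :=
          measureReal_mono (preimage_mono (Iic_subset_Iic.2 (not_le.1 ht).le))
      _ = 0 := by simp [hcdf 0 le_rfl]

lemma expMeasure_le_restrict_Ici : expMeasure 1 ≤ volume.restrict (Ici 0) := by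
  rw [expMeasure, gammaMeasure, ← withDensity_indicator_one measurableSet_Ici]
  refine withDensity_mono (ae_of_all _ fun x => ?_)
  change exponentialPDF 1 x ≤ _
  rw [exponentialPDF_eq]
  split_ifs with hx
  · rw [indicator_of_mem (mem_Ici.2 hx), Pi.one_apply, ← ENNReal.ofReal_one]
    exact ENNReal.ofReal_le_ofReal (by simpa using Real.exp_le_one_iff.2 (neg_nonpos.2 hx))
  · simp

lemma measure_preimage_Ioc_le_of_map_le {X : Ω → ℝ} (hX : Measurable X)
    (hlaw : μ.map X ≤ volume.restrict (Ici 0)) (a b : ℝ) :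
    μ (X ⁻¹' Ioc a b) ≤ ENNReal.ofReal (simplexVolume 1 b - simplexVolume 1 a) := by
  have hsub : Ioc a b ∩ Ici 0 ⊆ Icc (max a 0) (max b 0) := fun x ⟨⟨hax, hxb⟩, hx0⟩ =>
    ⟨max_le hax.le hx0, le_max_of_le_left hxb⟩
  calc μ (X ⁻¹' Ioc a b) = μ.map X (Ioc a b) := (Measure.map_apply hX measurableSet_Ioc).symm
    _ ≤ volume (Ioc a b ∩ Ici 0) := (hlaw _).trans_eq (Measure.restrict_apply measurableSet_Ioc)
    _ ≤ volume (Icc (max a 0) (max b 0)) := measure_mono hsub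
    _ = ENNReal.ofReal (simplexVolume 1 b - simplexVolume 1 a) := by simp [simplexVolume]

lemma measure_add_preimage_Ioc_le [IsProbabilityMeasure μ] {Y S : Ω → ℝ} (hY : Measurable Y)
    (hS : Measurable S) (hind : IndepFun Y S μ) (hlaw : μ.map Y ≤ volume.restrict (Ici 0))
    {M : ℕ} (hM : M ≠ 0)
    (hSle : ∀ a b, a ≤ b →
      μ (S ⁻¹' Ioc a b) ≤ ENNReal.ofReal (simplexVolume M b - simplexVolume M a))
    {a b : ℝ} (hab : a ≤ b) :
    μ ((Y + S) ⁻¹' Ioc a b) ≤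
      ENNReal.ofReal (simplexVolume (M + 1) b - simplexVolume (M + 1) a) := by
  have hE : MeasurableSet {p : ℝ × ℝ | p.1 + p.2 ∈ Ioc a b} :=
    (measurable_fst.add measurable_snd) measurableSet_Ioc
  have hnonneg : ∀ x, 0 ≤ simplexVolume M (b - x) - simplexVolume M (a - x) := fun x =>
    sub_nonneg.2 (simplexVolume_mono M (by linarith))
  calc μ ((Y + S) ⁻¹' Ioc a b)
      = (μ.map Y).prod (μ.map S) {p | p.1 + p.2 ∈ Ioc a b} := by
        rw [← hind.map_prod_eq_prod_map_map hY.aemeasurable hS.aemeasurable,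
          Measure.map_apply (hY.prodMk hS) hE]
        rfl
    _ = ∫⁻ x, μ.map S (Ioc (a - x) (b - x)) ∂μ.map Y := by
        rw [Measure.prod_apply hE]
        congr with x
        rw [← preimage_const_add_Ioc]
        rfl
    _ ≤ ∫⁻ x, ENNReal.ofReal (simplexVolume M (b - x) - simplexVolume M (a - x))
          ∂μ.map Y :=
        lintegral_mono fun x => by
          rw [Measure.map_apply hS measurableSet_Ioc]
          exact hSle _ _ (by linarith)
    _ ≤ ∫⁻ x in Ici 0, ENNReal.ofReal (simplexVolume M (b - x) - simplexVolume M (a - x)) :=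
        lintegral_mono' hlaw le_rfl
    _ = ENNReal.ofReal (∫ x in Ici 0, (simplexVolume M (b - x) - simplexVolume M (a - x))) :=
        (ofReal_integral_eq_lintegral_ofReal
          ((integrableOn_Ici_simplexVolume_sub hM b).sub
            (integrableOn_Ici_simplexVolume_sub hM a))
          (ae_of_all _ hnonneg)).symm
    _ = ENNReal.ofReal (simplexVolume (M + 1) b - simplexVolume (M + 1) a) := by
        rw [integral_sub (integrableOn_Ici_simplexVolume_sub hM b)
          (integrableOn_Ici_simplexVolume_sub hM a), integral_Ici_simplexVolume_sub hM,
          integral_Ici_simplexVolume_sub hM]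

theorem measure_sum_preimage_Ioc_le [IsProbabilityMeasure μ] {ι : Type*} {X : ι → Ω → ℝ}
    (hX : ∀ i, Measurable (X i)) (hind : iIndepFun X μ)
    (hlaw : ∀ i, μ.map (X i) ≤ volume.restrict (Ici 0)) {s : Finset ι} (hs : s.Nonempty)
    {a b : ℝ} (hab : a ≤ b) :
    μ ((∑ i ∈ s, X i) ⁻¹' Ioc a b) ≤
      ENNReal.ofReal (simplexVolume s.card b - simplexVolume s.card a) := by
  induction hs using Finset.Nonempty.cons_induction generalizing a b with
  | singleton i => simpa using measure_preimage_Ioc_le_of_map_le (hX i) (hlaw i) a b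
  | cons i s hi hs ih =>
    rw [Finset.sum_cons, Finset.card_cons]
    have hsum : Measurable (∑ j ∈ s, X j) := by
      rw [Finset.sum_fn]
      exact s.measurable_sum fun j _ => hX j
    exact measure_add_preimage_Ioc_le (hX i) hsum (hind.indepFun_finsetSum_of_notMem hX hi).symm
      (hlaw i) hs.card_pos.ne' (fun _ _ => ih) hab

def cycleArc {n k : ℕ} (f : Fin k → Fin n) (i : Fin k) : Fin n × Fin n :=
  (f i, f ⟨(i.1 + 1) % k, Nat.mod_lt _ i.pos⟩)

lemma cycleArc_injective {n k : ℕ} {f : Fin k → Fin n} (hf : Injective f) :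
    Injective (cycleArc f) :=
  fun _ _ h => hf (congrArg Prod.fst h)

lemma measure_cycleWeight_mem_Ioc_le [IsProbabilityMeasure μ] {n k : ℕ} (hk : k ≠ 0)
    {w : Fin n → Fin n → Ω → ℝ} (hmeas : ∀ i j, Measurable (w i j))
    (hindep : iIndepFun (fun p : Fin n × Fin n => w p.1 p.2) μ)
    (hlaw : ∀ i j, μ.map (w i j) ≤ volume.restrict (Ici 0))
    {f : Fin k → Fin n} (hf : Injective f) {a b : ℝ} (hab : a ≤ b) :
    μ {ω | cycleWeight (fun i j => w i j ω) f ∈ Ioc a b} ≤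
      ENNReal.ofReal (simplexVolume k b - simplexVolume k a) := by
  set arcs := Finset.univ.map ⟨cycleArc f, cycleArc_injective hf⟩
  have harcs : arcs.card = k := by simp [arcs]
  have hweight : {ω | cycleWeight (fun i j => w i j ω) f ∈ Ioc a b} =
      (∑ p ∈ arcs, fun ω => w p.1 p.2 ω) ⁻¹' Ioc a b := by
    ext ω
    simp [arcs, cycleWeight, cycleArc, Finset.sum_apply]
  rw [hweight, ← harcs]
  exact measure_sum_preimage_Ioc_le (fun p => hmeas p.1 p.2) hindep (fun p => hlaw p.1 p.2)
    (Finset.card_ne_zero.1 (harcs ▸ hk)) hab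

lemma integral_cycleCountIn [IsProbabilityMeasure μ] {n k : ℕ}
    {w : Fin n → Fin n → Ω → ℝ} (hmeas : ∀ i j, Measurable (w i j)) (c₁ c₂ : ℝ) :
    ∫ ω, cycleCountIn n k (fun i j => w i j ω) c₁ c₂ ∂μ =
      (1 / (k : ℝ)) * ∑ f ∈ Finset.univ.filter (fun f : Fin k → Fin n => Injective f),
        μ.real {ω | cycleWeight (fun i j => w i j ω) f ∈
          Ioc (c₁ * k / n) (c₂ * k / n)} := by
  set E : (Fin k → Fin n) → Set Ω :=
    fun f => {ω | cycleWeight (fun i j => w i j ω) f ∈ Ioc (c₁ * k / n) (c₂ * k / n)}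
  have hE : ∀ f, MeasurableSet (E f) := fun f =>
    measurableSet_preimage (Finset.measurable_sum _ fun i _ => hmeas _ _) measurableSet_Ioc
  have hcount : (fun ω => cycleCountIn n k (fun i j => w i j ω) c₁ c₂) = fun ω =>
      (1 / (k : ℝ)) * ∑ f ∈ Finset.univ.filter (fun f : Fin k → Fin n => Injective f),
        (E f).indicator 1 ω := by
    funext ω
    simp only [cycleCountIn, E, indicator_apply, mem_ofPred_eq, mem_Ioc, Pi.one_apply]
  have hint : ∀ f, Integrable ((E f).indicator 1) μ := fun f =>
    (integrable_indicator_iff (hE f)).2 (integrable_const (1 : ℝ)).integrableOn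
  rw [hcount, integral_const_mul, integral_finsetSum _ fun f _ => hint f]
  simp_rw [integral_indicator_one (hE _)]
  rfl
end

/-- For `2 ≤ k ≤ n` and `0 ≤ c₁ ≤ c₂`, the expected number of directed `k`-cycles,
in the complete graph on `n` vertices with i.i.d. mean-1 exponential edge weights,
whose total weight lies in `(c₁·k/n, c₂·k/n]`, is at most `(c₂^k − c₁^k)·k^k/(k·k!)`. -/
theorem expected_light_kcycles_le
    {Ω : Type*} [MeasurableSpace Ω] (μ : Measure Ω) [IsProbabilityMeasure μ]
    (n k : ℕ) (hk : 2 ≤ k) (hkn : k ≤ n)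
    (w : Fin n → Fin n → Ω → ℝ) (hmeas : ∀ i j, Measurable (w i j))
    (hindep : iIndepFun (fun p : Fin n × Fin n => w p.1 p.2) μ)
    (hexp : ∀ i j, ∀ x : ℝ, 0 ≤ x →
      μ {ω | x < w i j ω} = ENNReal.ofReal (Real.exp (-x)))
    (c₁ c₂ : ℝ) (hc₁ : 0 ≤ c₁) (hc : c₁ ≤ c₂) :
    ∫ ω, cycleCountIn n k (fun i j => w i j ω) c₁ c₂ ∂μ ≤
      (c₂ ^ k - c₁ ^ k) * (k : ℝ) ^ k / ((k : ℝ) * (k.factorial : ℝ)) := by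
  have hn : (0 : ℝ) < n := by exact_mod_cast (by omega : 0 < n)
  set a := c₁ * k / n
  set b := c₂ * k / n
  have ha : 0 ≤ a := by positivity
  have hab : a ≤ b := by unfold a b; gcongr
  have hlaw : ∀ i j, μ.map (w i j) ≤ volume.restrict (Ici 0) := fun i j =>
    (map_eq_expMeasure_of_tail (hmeas i j) (hexp i j)).trans_le expMeasure_le_restrict_Ici
  have hcycle : ∀ f ∈ Finset.univ.filter (fun f : Fin k → Fin n => Injective f),
      μ.real {ω | cycleWeight (fun i j => w i j ω) f ∈ Ioc a b} ≤
        simplexVolume k b - simplexVolume k a := fun f hf =>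
    ENNReal.toReal_le_of_le_ofReal (sub_nonneg.2 (simplexVolume_mono k hab))
      (measure_cycleWeight_mem_Ioc_le (by omega) hmeas hindep hlaw (Finset.mem_filter.1 hf).2
        hab)
  have hcard : (Finset.univ.filter (fun f : Fin k → Fin n => Injective f)).card ≤ n ^ k :=
    (Finset.card_filter_le _ _).trans_eq (by simp)
  calc ∫ ω, cycleCountIn n k (fun i j => w i j ω) c₁ c₂ ∂μ
      = (1 / (k : ℝ)) * ∑ f ∈ Finset.univ.filter (fun f : Fin k → Fin n => Injective f),
          μ.real {ω | cycleWeight (fun i j => w i j ω) f ∈ Ioc a b} :=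
        integral_cycleCountIn hmeas c₁ c₂
    _ ≤ (1 / (k : ℝ)) * (n ^ k * (simplexVolume k b - simplexVolume k a)) := by
        gcongr
        refine (Finset.sum_le_card_nsmul _ _ _ hcycle).trans ?_
        rw [nsmul_eq_mul]
        gcongr
        · exact sub_nonneg.2 (simplexVolume_mono k hab)
        · exact_mod_cast hcard
    _ = (c₂ ^ k - c₁ ^ k) * (k : ℝ) ^ k / ((k : ℝ) * (k.factorial : ℝ)) := by
        simp only [simplexVolume, max_eq_left ha, max_eq_left (ha.trans hab), a, b, div_pow,
          mul_pow]
        field_simp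
end

section
/- Let W₁,…,W_L be i.i.d. mean-1 exponentials, and set X_i = W_i − 1. Fix 0 < ε ≤ 1/4 and A > 0. If 0 ≤ Σ_{i=1}^L X_i ≤ εA and |Σ_{i=1}^k X_i| ≤ (1−ε)A/2 for all 1 ≤ k ≤ L, then for every a ∈ {1,…,L} and ℓ ∈ {1,…,L}, Σ_{i=1}^ℓ W_{(a+i mod L)} ≤ (ℓ + A) · (Σ_{i=1}^L W_i)/L, where a + i mod L is interpreted in {1,…,L}. -/
/-- Deterministic lemma behind uniform lightness: if the centered partial sums
`Σ_{i=1}^k (W_i − 1)` are all bounded by `(1−ε)A/2` in absolute value and the total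
`Σ_{i=1}^L (W_i − 1)` lies in `[0, εA]`, then every cyclic subpath has weight at most
`(its length + A)` times the average weight. (The `W_i` are values of i.i.d. mean-1
exponentials, hence positive.) -/
theorem cyclic_subpath_weight_bound
    (L : ℕ) (hL : 1 ≤ L) (W : ℕ → ℝ) (hWpos : ∀ i, 0 < W i)
    (ε A : ℝ) (hε : 0 < ε) (hε' : ε ≤ 1 / 4) (hA : 0 < A)
    (htot₀ : 0 ≤ ∑ i ∈ Finset.Icc 1 L, (W i - 1))
    (htot₁ : ∑ i ∈ Finset.Icc 1 L, (W i - 1) ≤ ε * A)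
    (hpart : ∀ k ∈ Finset.Icc 1 L, |∑ i ∈ Finset.Icc 1 k, (W i - 1)| ≤ (1 - ε) * A / 2) :
    ∀ a ∈ Finset.Icc 1 L, ∀ ℓ ∈ Finset.Icc 1 L,
      ∑ i ∈ Finset.Icc 1 ℓ, W ((a + i - 1) % L + 1) ≤
        ((ℓ : ℝ) + A) * (∑ i ∈ Finset.Icc 1 L, W i) / L := by
  intro a ha ℓ hℓ
  rw [Finset.mem_Icc] at ha hℓ
  obtain ⟨ha1, haL⟩ := ha
  obtain ⟨hℓ1, hℓL⟩ := hℓ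
  set g : ℕ → ℝ := fun i => W i - 1 with hgdef
  have hIoc : ∀ k : ℕ, Finset.Icc 1 k = Finset.Ioc 0 k := by
    intro k; ext x; simp only [Finset.mem_Icc, Finset.mem_Ioc]; omega
  set S : ℕ → ℝ := fun k => ∑ i ∈ Finset.Ioc 0 k, g i with hSdef
  have hSbound : ∀ k, 1 ≤ k → k ≤ L → |S k| ≤ (1 - ε) * A / 2 := by
    intro k h1 h2
    have := hpart k (Finset.mem_Icc.mpr ⟨h1, h2⟩)
    rwa [hIoc] at this
  have hT0 : 0 ≤ S L := by rwa [hIoc] at htot₀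
  have hT1 : S L ≤ ε * A := by rwa [hIoc] at htot₁
  -- shift lemma
  have hshift : ∀ (b m n : ℕ), ∑ i ∈ Finset.Ioc m n, g (b + i)
      = ∑ j ∈ Finset.Ioc (b + m) (b + n), g j := by
    intro b m n
    refine Finset.sum_nbij' (fun i => b + i) (fun j => j - b) ?_ ?_ ?_ ?_ ?_ <;>
      intro x hx <;> simp only [Finset.mem_Ioc] at * <;> first | omega | (congr 1; omega)
  have hkey : ∑ i ∈ Finset.Icc 1 ℓ, g ((a + i - 1) % L + 1) ≤ A := by
    rw [hIoc]
    by_cases hcase : a + ℓ ≤ L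
    · have hrw : ∀ i ∈ Finset.Ioc 0 ℓ, g ((a + i - 1) % L + 1) = g (a + i) := by
        intro i hi; rw [Finset.mem_Ioc] at hi
        have hlt : a + i - 1 < L := by omega
        rw [Nat.mod_eq_of_lt hlt]
        congr 1; omega
      rw [Finset.sum_congr rfl hrw, hshift]
      have hsplit : S a + ∑ j ∈ Finset.Ioc (a + 0) (a + ℓ), g j = S (a + ℓ) := by
        simpa using Finset.sum_Ioc_consecutive g (Nat.zero_le a) (by omega : a ≤ a + ℓ)
      have h1 := hSbound a ha1 haL
      have h2 := hSbound (a + ℓ) (by omega) hcase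
      have hεA : 0 ≤ ε * A := le_of_lt (mul_pos hε hA)
      have heq : ∑ j ∈ Finset.Ioc (a + 0) (a + ℓ), g j = S (a + ℓ) - S a := by
        linarith [hsplit]
      rw [heq]
      have hb1 : S (a + ℓ) ≤ (1 - ε) * A / 2 := (abs_le.mp h2).2
      have hb2 : -((1 - ε) * A / 2) ≤ S a := (abs_le.mp h1).1
      nlinarith
    · -- wrap-around: split at L - a
      push_neg at hcase
      have hsplit : ∑ i ∈ Finset.Ioc 0 (L - a), g ((a + i - 1) % L + 1)
            + ∑ i ∈ Finset.Ioc (L - a) ℓ, g ((a + i - 1) % L + 1)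
          = ∑ i ∈ Finset.Ioc 0 ℓ, g ((a + i - 1) % L + 1) :=
        Finset.sum_Ioc_consecutive _ (Nat.zero_le _) (by omega)
      rw [← hsplit]
      -- first part: indices a+1 .. L
      have hrw1 : ∀ i ∈ Finset.Ioc 0 (L - a), g ((a + i - 1) % L + 1) = g (a + i) := by
        intro i hi; rw [Finset.mem_Ioc] at hi
        have hlt : a + i - 1 < L := by omega
        rw [Nat.mod_eq_of_lt hlt]; congr 1; omega
      have hrw2 : ∀ i ∈ Finset.Ioc (L - a) ℓ, g ((a + i - 1) % L + 1) = g (a + i - L) := by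
        intro i hi; rw [Finset.mem_Ioc] at hi
        have h1 : a + i - 1 = (a + i - 1 - L) + L := by omega
        rw [h1, Nat.add_mod_right, Nat.mod_eq_of_lt (by omega)]
        congr 1; omega
      rw [Finset.sum_congr rfl hrw1, Finset.sum_congr rfl hrw2]
      have e1 : ∑ i ∈ Finset.Ioc 0 (L - a), g (a + i) = S L - S a := by
        rw [hshift]
        have := Finset.sum_Ioc_consecutive g (Nat.zero_le a) (by omega : a ≤ L)
        have h0 : a + 0 = a := rfl
        have hLa : a + (L - a) = L := by omega
        rw [h0, hLa]
        linarith [this]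
      have e2 : ∑ i ∈ Finset.Ioc (L - a) ℓ, g (a + i - L) = S (a + ℓ - L) := by
        refine Finset.sum_nbij' (fun i => a + i - L) (fun j => j + L - a) ?_ ?_ ?_ ?_ ?_ <;>
          intro x hx <;> simp only [Finset.mem_Ioc] at * <;> first | omega | (congr 1; omega)
      rw [e1, e2]
      have h1 := hSbound a ha1 haL
      have h2 := hSbound (a + ℓ - L) (by omega) (by omega)
      have hb1 := (abs_le.mp h1).1
      have hb2 := (abs_le.mp h2).2
      nlinarith
  -- conclude
  have hsumW : ∑ i ∈ Finset.Icc 1 ℓ, W ((a + i - 1) % L + 1)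
      = (∑ i ∈ Finset.Icc 1 ℓ, g ((a + i - 1) % L + 1)) + ℓ := by
    simp [hgdef, Finset.sum_sub_distrib, Nat.card_Icc]
  have hsumWL : ∑ i ∈ Finset.Icc 1 L, W i = S L + L := by
    rw [hIoc, hSdef]
    simp [hgdef, Finset.sum_sub_distrib, Nat.card_Ioc]
  have hLpos : (0 : ℝ) < L := by exact_mod_cast hL
  have hRHS : ((ℓ : ℝ) + A) ≤ ((ℓ : ℝ) + A) * (∑ i ∈ Finset.Icc 1 L, W i) / L := by
    rw [hsumWL, le_div_iff₀ hLpos]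
    have hℓ0 : (0:ℝ) ≤ (ℓ:ℝ) := Nat.cast_nonneg _
    nlinarith
  calc ∑ i ∈ Finset.Icc 1 ℓ, W ((a + i - 1) % L + 1)
      ≤ (ℓ : ℝ) + A := by rw [hsumW]; linarith
    _ ≤ _ := hRHS
end

section
/- Fix δ = δ(n) with δ → 0 as n → ∞, and let L₀ = (log δ^{-1})/(2δ). Then Σ_{k=1}^{⌊L₀⌋} (1/(√(2π) k^{3/2})) · ((1+δ)^k − 1) → 0 as n → ∞. -/
/-!
Split the sum at `M = ⌈A / δ⌉` for a large constant `A`. For `k ≤ M`,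
`(1 + δ)^k - 1 ≤ δ k e^{δk} ≤ e^{A+1} δ k`, and `Σ_{k ≤ M} k^{-1/2} ≤ 2√M` makes this range
`O_A(√δ)`. For `M < k ≤ L₀`, `(1 + δ)^k ≤ e^{δ L₀} = δ^{-1/2}`, and the tail
`Σ_{k > M} k^{-3/2} ≤ 2/√M` makes this range at most `2/√(δM) ≤ 2/√A`.
Letting `δ → 0` and then `A → ∞` gives the claim.
-/

open Real Filter Finset Topology

theorem Finset.sum_Ioc_le_sub_of_le_sub {M : Type*} [AddCommGroup M] [PartialOrder M]
    [IsOrderedAddMonoid M] {f g : ℕ → M} {a b : ℕ} (hab : a ≤ b)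
    (h : ∀ k ∈ Ico a b, f (k + 1) ≤ g (k + 1) - g k) :
    ∑ k ∈ Ioc a b, f k ≤ g b - g a := by
  induction b, hab using Nat.le_induction with
  | base => simp
  | succ b hab ih =>
    rw [sum_Ioc_succ_top (by omega)]
    have hlast := h b (by simp; omega)
    have hrest := ih fun k hk => h k (Ico_subset_Ico_right (by omega) hk)
    calc ∑ k ∈ Ioc a b, f k + f (b + 1) ≤ (g b - g a) + (g (b + 1) - g b) := add_le_add hrest hlast
      _ = g (b + 1) - g a := by abel

lemma one_div_sqrt_le_two_mul_sqrt_sub_sqrt {x : ℝ} (hx : 0 ≤ x) :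
    1 / √(x + 1) ≤ 2 * (√(x + 1) - √x) := by
  have ha : 0 < √(x + 1) := sqrt_pos.2 (by linarith)
  have hab : √x ≤ √(x + 1) := sqrt_le_sqrt (by linarith)
  have hsq : √(x + 1) ^ 2 - √x ^ 2 = 1 := by
    rw [sq_sqrt (by linarith), sq_sqrt hx]; ring
  rw [div_le_iff₀ ha]
  nlinarith

lemma one_div_mul_sqrt_le_two_div_sqrt_sub_two_div_sqrt {x : ℝ} (hx : 0 < x) :
    1 / ((x + 1) * √(x + 1)) ≤ 2 / √x - 2 / √(x + 1) := by
  have ha : 0 < √(x + 1) := sqrt_pos.2 (by linarith)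
  have hb : 0 < √x := sqrt_pos.2 hx
  have hab : √x ≤ √(x + 1) := sqrt_le_sqrt (by linarith)
  have hsq : √(x + 1) ^ 2 - √x ^ 2 = 1 := by
    rw [sq_sqrt (by linarith), sq_sqrt hx.le]; ring
  rw [show (x + 1) * √(x + 1) = √(x + 1) ^ 2 * √(x + 1) by rw [sq_sqrt (by linarith)]]
  field_simp
  nlinarith [mul_pos ha hb]

lemma sum_Ioc_one_div_sqrt_le (n : ℕ) : ∑ k ∈ Ioc 0 n, 1 / √k ≤ 2 * √n := by
  have := sum_Ioc_le_sub_of_le_sub (f := fun k : ℕ => 1 / √k)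
    (g := fun k : ℕ => 2 * √k) n.zero_le fun k _ => by
      push_cast
      linarith [one_div_sqrt_le_two_mul_sqrt_sub_sqrt k.cast_nonneg]
  simpa using this

lemma sum_Ioc_one_div_mul_sqrt_le {m : ℕ} (hm : 1 ≤ m) (n : ℕ) :
    ∑ k ∈ Ioc m n, 1 / (k * √k) ≤ 2 / √m := by
  rcases le_or_gt m n with hmn | hnm
  · have := sum_Ioc_le_sub_of_le_sub (f := fun k : ℕ => 1 / (k * √k))
      (g := fun k : ℕ => -(2 / √k)) hmn fun k hk => by
        have hk : (0 : ℝ) < k := Nat.cast_pos.2 (by have := (mem_Ico.1 hk).1; omega)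
        push_cast
        linarith [one_div_mul_sqrt_le_two_div_sqrt_sub_two_div_sqrt hk]
    have : 0 ≤ 2 / √n := by positivity
    linarith
  · rw [Ioc_eq_empty (by omega), sum_empty]
    positivity

lemma exp_sub_one_le_mul_exp (x : ℝ) : exp x - 1 ≤ x * exp x := by
  have h := mul_le_mul_of_nonneg_right (one_sub_le_exp_neg x) (exp_pos x).le
  rw [← exp_add, neg_add_cancel, exp_zero] at h
  linarith

lemma one_add_pow_le_exp_mul {d : ℝ} (hd : 0 ≤ d) (k : ℕ) : (1 + d) ^ k ≤ exp (d * k) := by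
  calc (1 + d) ^ k ≤ exp d ^ k := by
        gcongr
        linarith [add_one_le_exp d]
    _ = exp (d * k) := by rw [← exp_nat_mul, mul_comm]

lemma one_add_pow_sub_one_le {d : ℝ} (hd : 0 ≤ d) (k : ℕ) :
    (1 + d) ^ k - 1 ≤ d * k * exp (d * k) := by
  linarith [one_add_pow_le_exp_mul hd k, exp_sub_one_le_mul_exp (d * k)]

lemma one_add_pow_sub_one_nonneg {d : ℝ} (hd : 0 ≤ d) (k : ℕ) : 0 ≤ (1 + d) ^ k - 1 :=
  sub_nonneg.2 (one_le_pow₀ (by linarith))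

noncomputable def excessSum (d : ℝ) (L : ℕ) : ℝ :=
  ∑ k ∈ Ioc 0 L, 1 / (k * √k) * ((1 + d) ^ k - 1)

lemma excessSum_nonneg {d : ℝ} (hd : 0 ≤ d) (L : ℕ) : 0 ≤ excessSum d L :=
  sum_nonneg fun k _ => mul_nonneg (by positivity) (one_add_pow_sub_one_nonneg hd k)

lemma excessSum_le {d : ℝ} (hd : 0 ≤ d) {M : ℕ} (hM : 1 ≤ M) (L : ℕ) :
    excessSum d L ≤ 2 * d * exp (d * M) * √M + 2 * exp (d * L) / √M := by
  have hterm : ∀ k : ℕ, 0 ≤ 1 / (k * √k) * ((1 + d) ^ k - 1) := fun k =>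
    mul_nonneg (by positivity) (one_add_pow_sub_one_nonneg hd k)
  rw [excessSum, ← sum_filter_add_sum_filter_not _ (· ≤ M)]
  refine add_le_add ?_ ?_
  · calc ∑ k ∈ (Ioc 0 L).filter (· ≤ M), 1 / (k * √k) * ((1 + d) ^ k - 1)
        ≤ ∑ k ∈ Ioc 0 M, 1 / (k * √k) * ((1 + d) ^ k - 1) :=
          sum_le_sum_of_subset_of_nonneg (fun k hk => by simp at hk ⊢; omega)
            fun k _ _ => hterm k
      _ ≤ ∑ k ∈ Ioc 0 M, d * exp (d * M) * (1 / √k) := sum_le_sum fun k hk => by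
          have hk := mem_Ioc.1 hk
          have hk0 : (0 : ℝ) < k := Nat.cast_pos.2 hk.1
          calc 1 / (k * √k) * ((1 + d) ^ k - 1) ≤ 1 / (k * √k) * (d * k * exp (d * M)) := by
                gcongr
                exact (one_add_pow_sub_one_le hd k).trans (by gcongr; exact_mod_cast hk.2)
            _ = d * exp (d * M) * (1 / √k) := by field_simp
      _ = d * exp (d * M) * ∑ k ∈ Ioc 0 M, 1 / √k := (mul_sum ..).symm
      _ ≤ d * exp (d * M) * (2 * √M) := by gcongr; exact sum_Ioc_one_div_sqrt_le M
      _ = 2 * d * exp (d * M) * √M := by ring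
  · calc ∑ k ∈ (Ioc 0 L).filter (¬ · ≤ M), 1 / (k * √k) * ((1 + d) ^ k - 1)
        ≤ ∑ k ∈ Ioc M L, 1 / (k * √k) * ((1 + d) ^ k - 1) :=
          sum_le_sum_of_subset_of_nonneg (fun k hk => by simp at hk ⊢; omega)
            fun k _ _ => hterm k
      _ ≤ ∑ k ∈ Ioc M L, exp (d * L) * (1 / (k * √k)) := sum_le_sum fun k hk => by
          rw [mul_comm]
          gcongr
          calc (1 + d) ^ k - 1 ≤ exp (d * k) := by linarith [one_add_pow_le_exp_mul hd k]
            _ ≤ exp (d * L) := by gcongr; exact_mod_cast (mem_Ioc.1 hk).2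
      _ = exp (d * L) * ∑ k ∈ Ioc M L, 1 / (k * √k) := (mul_sum ..).symm
      _ ≤ exp (d * L) * (2 / √M) := by gcongr; exact sum_Ioc_one_div_mul_sqrt_le hM L
      _ = 2 * exp (d * L) / √M := by ring

lemma exp_mul_floor_log_inv_div_le {d : ℝ} (hd0 : 0 < d) (hd1 : d ≤ 1) :
    exp (d * ⌊log d⁻¹ / (2 * d)⌋₊) ≤ 1 / √d := by
  have hlog : 0 ≤ log d⁻¹ := log_nonneg (one_le_inv_iff₀.2 ⟨hd0, hd1⟩)
  calc exp (d * ⌊log d⁻¹ / (2 * d)⌋₊) ≤ exp (d * (log d⁻¹ / (2 * d))) := by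
        gcongr
        exact Nat.floor_le (by positivity)
    _ = 1 / √d := by
        rw [show d * (log d⁻¹ / (2 * d)) = log d⁻¹ / 2 by field_simp, exp_half,
          exp_log (inv_pos.2 hd0), sqrt_inv, one_div]

lemma excessSum_floor_log_inv_div_le {d : ℝ} (hd0 : 0 < d) (hd1 : d ≤ 1) {A : ℝ} (hA : 0 < A) :
    excessSum d ⌊log d⁻¹ / (2 * d)⌋₊ ≤ 2 * exp (A + 1) * √(A + 1) * √d + 2 / √A := by
  set M := ⌈A / d⌉₊
  have hM : 1 ≤ M := Nat.one_le_ceil_iff.2 (by positivity)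
  have hAM : A ≤ d * M := by
    have := Nat.le_ceil (A / d)
    rwa [div_le_iff₀ hd0, mul_comm] at this
  have hMA : d * M ≤ A + 1 := by
    have hlt : d * M < d * (A / d + 1) :=
      mul_lt_mul_of_pos_left (Nat.ceil_lt_add_one (by positivity)) hd0
    rw [mul_add, mul_div_cancel₀ _ hd0.ne'] at hlt
    linarith
  calc excessSum d ⌊log d⁻¹ / (2 * d)⌋₊
      ≤ 2 * d * exp (d * M) * √M + 2 * exp (d * ⌊log d⁻¹ / (2 * d)⌋₊) / √M :=
        excessSum_le hd0.le hM _
    _ = 2 * exp (d * M) * √(d * M) * √d + 2 * exp (d * ⌊log d⁻¹ / (2 * d)⌋₊) / √M := by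
        rw [sqrt_mul hd0.le]
        linear_combination (2 * exp (d * M) * √M) * (mul_self_sqrt hd0.le).symm
    _ ≤ 2 * exp (A + 1) * √(A + 1) * √d + 2 * (1 / √d) / √M := by
        gcongr
        exact exp_mul_floor_log_inv_div_le hd0 hd1
    _ = 2 * exp (A + 1) * √(A + 1) * √d + 2 / √(d * M) := by
        rw [sqrt_mul hd0.le]; ring
    _ ≤ 2 * exp (A + 1) * √(A + 1) * √d + 2 / √A := by gcongr

theorem tendsto_excessSum_floor_log_inv_div :
    Tendsto (fun d => excessSum d ⌊log d⁻¹ / (2 * d)⌋₊) (𝓝[>] 0) (𝓝 0) := by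
  rw [Metric.tendsto_nhds]
  intro ε hε
  set A := (4 / ε) ^ 2
  have hA : 0 < A := by positivity
  have hsmall : Tendsto (fun d => 2 * exp (A + 1) * √(A + 1) * √d) (𝓝[>] 0) (𝓝 0) := by
    have hcont : Continuous fun d : ℝ => 2 * exp (A + 1) * √(A + 1) * √d := by fun_prop
    simpa using (hcont.tendsto 0).mono_left nhdsWithin_le_nhds
  filter_upwards [hsmall.eventually (gt_mem_nhds (half_pos hε)), Ioc_mem_nhdsGT one_pos]
    with d hd ⟨hd0, hd1⟩
  rw [dist_zero_right, norm_of_nonneg (excessSum_nonneg hd0.le _)]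
  have hA' : 2 / √A = ε / 2 := by
    rw [sqrt_sq (by positivity)]; field_simp; ring
  linarith [excessSum_floor_log_inv_div_le hd0 hd1 hA]

lemma one_div_sqrt_two_pi_mul_rpow_le {x : ℝ} (hx : 0 ≤ x) :
    1 / (√(2 * π) * x ^ (3 / 2 : ℝ)) ≤ 1 / (x * √x) := by
  have h32 : x ^ (3 / 2 : ℝ) = x * √x := by
    rw [show (3 / 2 : ℝ) = 1 + 1 / 2 by norm_num, rpow_add' hx (by norm_num), rpow_one,
      sqrt_eq_rpow]
  have hπ : 1 ≤ √(2 * π) := one_le_sqrt.2 (by linarith [pi_gt_three])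
  rw [h32]
  rcases (mul_nonneg hx (sqrt_nonneg x)).eq_or_lt with h0 | hpos
  · simp [← h0]
  · exact one_div_le_one_div_of_le hpos (le_mul_of_one_le_left hpos.le hπ)

/-- If `δ = δ(n) → 0` and `L₀ = (log δ⁻¹)/(2δ)`, then
`Σ_{k=1}^{⌊L₀⌋} ((1+δ)^k − 1)/(√(2π) k^{3/2}) → 0` as `n → ∞`. -/
theorem light_not_supercritical_sum_tendsto_zero
    (δ : ℕ → ℝ) (hδpos : ∀ n, 0 < δ n) (hδ : Tendsto δ atTop (nhds 0)) :
    Tendsto (fun n =>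
        ∑ k ∈ Finset.Icc 1 ⌊Real.log (δ n)⁻¹ / (2 * δ n)⌋₊,
          (1 / (Real.sqrt (2 * π) * (k : ℝ) ^ (3 / 2 : ℝ))) * ((1 + δ n) ^ k - 1))
      atTop (nhds 0) := by
  have hδ_pos : Tendsto δ atTop (𝓝[>] 0) :=
    tendsto_nhdsWithin_iff.2 ⟨hδ, Eventually.of_forall hδpos⟩
  have hexcess n k : 0 ≤ (1 + δ n) ^ k - 1 := one_add_pow_sub_one_nonneg (hδpos n).le k
  refine squeeze_zero (fun n => sum_nonneg fun k _ => mul_nonneg (by positivity) (hexcess n k))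
    (fun n => ?_) (tendsto_excessSum_floor_log_inv_div.comp hδ_pos)
  rw [Function.comp_apply, excessSum, ← Icc_add_one_left_eq_Ioc]
  exact sum_le_sum fun k _ =>
    mul_le_mul_of_nonneg_right (one_div_sqrt_two_pi_mul_rpow_le k.cast_nonneg) (hexcess n k)
end

section
/- Define q_k = (1/2)∫_0^1 c^{k-1}√(1−c)·e^{c/2+c²/4} dc (Janson's limiting length distribution for the min max-weight cycle in the undirected graph). Then q_k = (1+o(1)) · (e^{3/4}√π/4) · k^{−3/2} as k → ∞, and Σ_{k≥3} q_k = 1. -/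
open Real Filter

/-- Janson's limiting length distribution for the min max-weight cycle in the
undirected complete graph. -/
noncomputable def qLen (k : ℕ) : ℝ :=
  (1 / 2) * ∫ c in (0 : ℝ)..1,
    c ^ (k - 1) * Real.sqrt (1 - c) * Real.exp (c / 2 + c ^ 2 / 4)

/-!
Write `q_{m+1} = J_m / 2` with `J_m = ∫₀¹ cᵐ √(1-c) g(c) dc`, `g(c) = exp (c/2 + c²/4)`.

As `m → ∞` the weight `cᵐ √(1-c)` concentrates at `c = 1` (Laplace's method), so
`J_m ~ g(1) B_m = e^{3/4} B_m`, where `B_m = ∫₀¹ cᵐ √(1-c) dc` is the Beta integral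
`B(3/2, m+1)`; Euler's limit formula for `Γ` reads exactly `m^{3/2} B_m → Γ(3/2) = √π/2`.

For the sum, `Σ_{k≥0} c^{k+2} = c²/(1-c)`, so by dominated convergence
`Σ_k q_{k+3} = ½ ∫₀¹ c² g(c) / √(1-c) dc`, and this integrand has the antiderivative
`-2 √(1-c) g(c)`, which goes from `-2` to `0`.
-/

open Set MeasureTheory Asymptotics Topology
open scoped Interval

noncomputable def powMoment (w : ℝ → ℝ) (m : ℕ) : ℝ := ∫ c in (0 : ℝ)..1, c ^ m * w c

section Laplace

variable {w g : ℝ → ℝ}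

theorem abs_powMoment_mul_sub_le (hw : ContinuousOn w (Icc 0 1))
    (hw₀ : ∀ c ∈ Icc (0 : ℝ) 1, 0 ≤ w c) (hg : ContinuousOn g (Icc 0 1)) {M a ε : ℝ}
    (ha : a ∈ Ico (0 : ℝ) 1) (hM : ∀ c ∈ Icc (0 : ℝ) 1, |g c - g 1| ≤ M)
    (hε : ∀ c ∈ Ioc a 1, |g c - g 1| ≤ ε) (m : ℕ) :
    |powMoment (fun c => w c * g c) m - g 1 * powMoment w m| ≤
      ε * powMoment w m + M * a ^ m * ∫ c in (0 : ℝ)..1, w c := by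
  have hM₀ : 0 ≤ M := (abs_nonneg _).trans (hM 1 ⟨zero_le_one, le_rfl⟩)
  have hε₀ : 0 ≤ ε := (abs_nonneg _).trans (hε 1 ⟨ha.2, le_rfl⟩)
  have hpt : ∀ c ∈ Icc (0 : ℝ) 1, |c ^ m * (w c * g c) - g 1 * (c ^ m * w c)| ≤
      ε * (c ^ m * w c) + M * a ^ m * w c := by
    intro c hc
    have hpow : 0 ≤ c ^ m := pow_nonneg hc.1 m
    -- below `a` the factor `cᵐ ≤ aᵐ` is small, above `a` the factor `g c - g 1` is
    have key : c ^ m * |g c - g 1| ≤ ε * c ^ m + M * a ^ m := by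
      rcases le_or_gt c a with hca | hac
      · nlinarith [mul_le_mul_of_nonneg_left (hM c hc) hpow,
          mul_le_mul_of_nonneg_left (pow_le_pow_left₀ hc.1 hca m) hM₀, mul_nonneg hε₀ hpow]
      · nlinarith [mul_le_mul_of_nonneg_left (hε c ⟨hac, hc.2⟩) hpow,
          mul_nonneg hM₀ (pow_nonneg ha.1 m)]
    calc |c ^ m * (w c * g c) - g 1 * (c ^ m * w c)| = (c ^ m * |g c - g 1|) * w c := by
          rw [show c ^ m * (w c * g c) - g 1 * (c ^ m * w c) = c ^ m * (g c - g 1) * w c by ring,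
            abs_mul, abs_mul, abs_of_nonneg hpow, abs_of_nonneg (hw₀ c hc)]
      _ ≤ (ε * c ^ m + M * a ^ m) * w c := mul_le_mul_of_nonneg_right key (hw₀ c hc)
      _ = _ := by ring
  have hW : IntervalIntegrable w volume 0 1 := hw.intervalIntegrable_of_Icc zero_le_one
  have hB : IntervalIntegrable (fun c => c ^ m * w c) volume 0 1 :=
    ((continuousOn_pow m).mul hw).intervalIntegrable_of_Icc zero_le_one
  have hJ : IntervalIntegrable (fun c => c ^ m * (w c * g c)) volume 0 1 :=
    ((continuousOn_pow m).mul (hw.mul hg)).intervalIntegrable_of_Icc zero_le_one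
  calc |powMoment (fun c => w c * g c) m - g 1 * powMoment w m|
      = |∫ c in (0 : ℝ)..1, c ^ m * (w c * g c) - g 1 * (c ^ m * w c)| := by
        rw [intervalIntegral.integral_sub hJ (hB.const_mul _),
          intervalIntegral.integral_const_mul, powMoment, powMoment]
    _ ≤ ∫ c in (0 : ℝ)..1, |c ^ m * (w c * g c) - g 1 * (c ^ m * w c)| :=
        intervalIntegral.abs_integral_le_integral_abs zero_le_one
    _ ≤ ∫ c in (0 : ℝ)..1, ε * (c ^ m * w c) + M * a ^ m * w c :=
        intervalIntegral.integral_mono_on zero_le_one (hJ.sub (hB.const_mul _)).abs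
          ((hB.const_mul _).add (hW.const_mul _)) hpt
    _ = ε * powMoment w m + M * a ^ m * ∫ c in (0 : ℝ)..1, w c := by
        rw [intervalIntegral.integral_add (hB.const_mul _) (hW.const_mul _),
          intervalIntegral.integral_const_mul, intervalIntegral.integral_const_mul, powMoment]

theorem isLittleO_powMoment_mul_sub (hw : ContinuousOn w (Icc 0 1))
    (hw₀ : ∀ c ∈ Icc (0 : ℝ) 1, 0 ≤ w c) (hg : ContinuousOn g (Icc 0 1))
    (hdecay : ∀ a ∈ Ico (0 : ℝ) 1, (fun m : ℕ => a ^ m) =o[atTop] powMoment w) :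
    (fun m => powMoment (fun c => w c * g c) m - g 1 * powMoment w m) =o[atTop] powMoment w := by
  obtain ⟨M, hM⟩ := isCompact_Icc.exists_bound_of_continuousOn (hg.sub continuousOn_const)
  simp only [Pi.sub_apply, Real.norm_eq_abs] at hM
  refine IsLittleO.of_bound fun ε hε => ?_
  obtain ⟨a, ha, hga⟩ : ∃ a ∈ Ico (0 : ℝ) 1, Ioc a 1 ⊆ {c | |g c - g 1| ≤ ε / 2} :=
    ((TFAE_mem_nhdsLE (zero_lt_one' ℝ) _).out 1 3).1 <|
      (hg 1 ⟨zero_le_one, le_rfl⟩).eventually (Metric.closedBall_mem_nhds _ (half_pos hε))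
  filter_upwards [((hdecay a ha).const_mul_left (M * ∫ c in (0 : ℝ)..1, w c)).bound
    (half_pos hε)] with m hm
  have hB₀ : 0 ≤ powMoment w m :=
    intervalIntegral.integral_nonneg zero_le_one fun c hc =>
      mul_nonneg (pow_nonneg hc.1 m) (hw₀ c hc)
  rw [Real.norm_eq_abs, Real.norm_eq_abs, abs_of_nonneg hB₀] at hm ⊢
  linarith [abs_powMoment_mul_sub_le hw hw₀ hg ha hM hga m, (le_abs_self _).trans hm]

end Laplace

theorem tendsto_rpow_mul_pow_of_lt_one (s : ℝ) {a : ℝ} (ha₀ : 0 ≤ a) (ha₁ : a < 1) :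
    Tendsto (fun n : ℕ => (n : ℝ) ^ s * a ^ n) atTop (𝓝 0) := by
  refine squeeze_zero' (.of_forall fun n => by positivity) ?_
    (tendsto_pow_const_mul_const_pow_of_abs_lt_one ⌈s⌉₊ (by rwa [abs_of_nonneg ha₀]))
  filter_upwards [eventually_ge_atTop 1] with n hn
  gcongr
  rw [← rpow_natCast]
  exact rpow_le_rpow_of_exponent_le (by exact_mod_cast hn) (Nat.le_ceil s)

theorem tendsto_natCast_add_one_rpow_div_rpow (s : ℝ) :
    Tendsto (fun n : ℕ => ((n : ℝ) + 1) ^ s / (n : ℝ) ^ s) atTop (𝓝 1) := by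
  have h := (tendsto_natCast_div_add_atTop (1 : ℝ)).rpow_const (p := -s) (Or.inl one_ne_zero)
  rw [one_rpow] at h
  refine h.congr fun n => ?_
  rw [div_rpow (by positivity) (by positivity), rpow_neg (by positivity), rpow_neg (by positivity),
    inv_div_inv]

theorem Real.Gamma_three_div_two : Gamma (3 / 2) = √π / 2 := by
  rw [show (3 : ℝ) / 2 = 1 / 2 + 1 by norm_num, Gamma_add_one (by norm_num), Gamma_one_half_eq]
  ring

theorem ofReal_powMoment_sqrt_one_sub (m : ℕ) :
    (powMoment (fun c => √(1 - c)) m : ℂ) = Complex.betaIntegral (3 / 2) (m + 1) := by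
  rw [Complex.betaIntegral_symm, Complex.betaIntegral, powMoment,
    ← intervalIntegral.integral_ofReal]
  refine intervalIntegral.integral_congr fun c hc => ?_
  rw [uIcc_of_le zero_le_one] at hc
  have h₁ : (c : ℂ) ^ ((m : ℂ) + 1 - 1) = ((c ^ m : ℝ) : ℂ) := by
    rw [add_sub_cancel_right, Complex.cpow_natCast, Complex.ofReal_pow]
  have h₂ : (1 - (c : ℂ)) ^ ((3 : ℂ) / 2 - 1) = ((√(1 - c) : ℝ) : ℂ) := by
    rw [show (3 : ℂ) / 2 - 1 = ((1 / 2 : ℝ) : ℂ) by norm_num, sqrt_eq_rpow,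
      Complex.ofReal_cpow (by linarith [hc.2]), Complex.ofReal_sub, Complex.ofReal_one]
  rw [h₁, h₂, Complex.ofReal_mul]

theorem powMoment_sqrt_one_sub_pos (m : ℕ) : 0 < powMoment (fun c => √(1 - c)) m :=
  intervalIntegral.intervalIntegral_pos_of_pos_on
    ((by fun_prop : Continuous fun c : ℝ => c ^ m * √(1 - c)).intervalIntegrable 0 1)
    (fun c hc => mul_pos (pow_pos hc.1 m) (sqrt_pos.2 (sub_pos.2 hc.2))) zero_lt_one

theorem tendsto_rpow_mul_powMoment_sqrt_one_sub :
    Tendsto (fun n : ℕ => (n : ℝ) ^ (3 / 2 : ℝ) * powMoment (fun c => √(1 - c)) n) atTop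
      (𝓝 (√π / 2)) := by
  rw [← Real.Gamma_three_div_two]
  refine (Real.GammaSeq_tendsto_Gamma _).congr fun n => Complex.ofReal_injective ?_
  rw [Complex.ofReal_mul, ofReal_powMoment_sqrt_one_sub, Complex.ofReal_cpow n.cast_nonneg]
  push_cast
  rw [← Complex.GammaSeq_eq_betaIntegral_of_re_pos (by norm_num), Complex.GammaSeq, Real.GammaSeq]
  push_cast [Complex.ofReal_cpow n.cast_nonneg]
  rfl

theorem isLittleO_pow_powMoment_sqrt_one_sub {a : ℝ} (ha : a ∈ Ico (0 : ℝ) 1) :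
    (fun m : ℕ => a ^ m) =o[atTop] powMoment fun c => √(1 - c) := by
  rw [isLittleO_iff_tendsto fun m h => absurd h (powMoment_sqrt_one_sub_pos m).ne']
  have h := (tendsto_rpow_mul_pow_of_lt_one (3 / 2) ha.1 ha.2).div
    tendsto_rpow_mul_powMoment_sqrt_one_sub (by positivity)
  rw [zero_div] at h
  refine h.congr' ?_
  filter_upwards [eventually_ge_atTop 1] with n hn
  rw [Pi.div_apply, mul_div_mul_left _ _ (by positivity)]

theorem qLen_add_one (n : ℕ) :
    qLen (n + 1) = powMoment (fun c => √(1 - c) * exp (c / 2 + c ^ 2 / 4)) n / 2 := by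
  rw [qLen, powMoment, Nat.add_sub_cancel, one_div_mul_eq_div]
  congr 1
  exact intervalIntegral.integral_congr fun c _ => mul_assoc _ _ _

theorem tendsto_powMoment_sqrt_one_sub_mul_exp_div :
    Tendsto (fun m => powMoment (fun c => √(1 - c) * exp (c / 2 + c ^ 2 / 4)) m /
      powMoment (fun c => √(1 - c)) m) atTop (𝓝 (exp (3 / 4))) := by
  have h := ((isLittleO_powMoment_mul_sub (by fun_prop) (fun c _ => sqrt_nonneg (1 - c))
    (by fun_prop : ContinuousOn (fun c : ℝ => exp (c / 2 + c ^ 2 / 4)) _)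
    fun a ha => isLittleO_pow_powMoment_sqrt_one_sub ha).tendsto_div_nhds_zero).add_const
      (exp (3 / 4))
  norm_num at h
  refine h.congr fun m => ?_
  rw [sub_div, mul_div_cancel_right₀ _ (powMoment_sqrt_one_sub_pos m).ne', sub_add_cancel]

theorem tendsto_qLen_div :
    Tendsto (fun k : ℕ =>
        qLen k / (exp (3 / 4) * √π / 4 * (k : ℝ) ^ (-(3 / 2) : ℝ))) atTop (𝓝 1) := by
  rw [← tendsto_add_atTop_iff_nat 1]
  have h := ((tendsto_powMoment_sqrt_one_sub_mul_exp_div.mul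
    tendsto_rpow_mul_powMoment_sqrt_one_sub).mul
      (tendsto_natCast_add_one_rpow_div_rpow (3 / 2))).div_const (exp (3 / 4) * (√π / 2))
  rw [mul_one, div_self (by positivity)] at h
  refine h.congr' ?_
  filter_upwards [eventually_ge_atTop 1] with n hn
  have hB := (powMoment_sqrt_one_sub_pos n).ne'
  have hpow : (n : ℝ) ^ (3 / 2 : ℝ) ≠ 0 := by positivity
  rw [qLen_add_one, Nat.cast_add_one, rpow_neg (by positivity)]
  generalize powMoment (fun c => √(1 - c) * exp (c / 2 + c ^ 2 / 4)) n = J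
  field_simp
  ring

-- at `c = 1` both sides vanish, the right one because `(√0)⁻¹ = 0⁻¹ = 0`
theorem hasSum_pow_mul_sqrt_one_sub {c : ℝ} (hc₀ : 0 ≤ c) (hc₁ : c ≤ 1) :
    HasSum (fun k : ℕ => c ^ k * √(1 - c)) (√(1 - c))⁻¹ := by
  rcases hc₁.lt_or_eq with hc₁ | rfl
  · have h := (hasSum_geometric_of_lt_one hc₀ hc₁).mul_right (√(1 - c))
    have hs : 0 < √(1 - c) := sqrt_pos.2 (by linarith)
    have hsq := sq_sqrt (sub_nonneg.2 hc₁.le)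
    have key : (1 - c)⁻¹ * √(1 - c) = (√(1 - c))⁻¹ := by
      field_simp
      linarith
    rwa [key] at h
  · simp [hasSum_zero]

theorem hasSum_powMoment_sqrt_one_sub_mul {f : ℝ → ℝ}
    (hf : AEStronglyMeasurable f (volume.restrict (Ι 0 1)))
    (hint : IntervalIntegrable (fun c => f c / √(1 - c)) volume 0 1) :
    HasSum (fun k => powMoment (fun c => √(1 - c) * f c) k)
      (∫ c in (0 : ℝ)..1, f c / √(1 - c)) := by
  have hsum : ∀ c ∈ Ι (0 : ℝ) 1, ∀ y : ℝ,
      HasSum (fun k : ℕ => c ^ k * (√(1 - c) * y)) (y / √(1 - c)) := fun c hc y => by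
    rw [uIoc_of_le zero_le_one] at hc
    simpa only [mul_assoc, div_eq_mul_inv, mul_comm y] using
      (hasSum_pow_mul_sqrt_one_sub hc.1.le hc.2).mul_right y
  refine intervalIntegral.hasSum_integral_of_dominated_convergence
    (fun k c => c ^ k * (√(1 - c) * |f c|)) (fun k => ?_) (fun k => ?_) ?_ ?_ ?_
  · exact ((continuous_pow k).aestronglyMeasurable).mul
      ((continuous_const.sub continuous_id).sqrt.aestronglyMeasurable.mul hf)
  · refine ae_of_all _ fun c hc => ?_
    rw [uIoc_of_le zero_le_one] at hc
    simp [abs_of_nonneg hc.1.le, abs_of_nonneg (sqrt_nonneg _)]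
  · exact ae_of_all _ fun c hc => (hsum c hc _).summable
  · refine hint.abs.congr fun c hc => ?_
    rw [(hsum c hc _).tsum_eq, abs_div, abs_of_nonneg (sqrt_nonneg _)]
  · exact ae_of_all _ fun c hc => hsum c hc _

theorem hasDerivAt_sqrt_one_sub_mul_exp {c : ℝ} (hc : c < 1) :
    HasDerivAt (fun x => -2 * (√(1 - x) * exp (x / 2 + x ^ 2 / 4)))
      (c ^ 2 * exp (c / 2 + c ^ 2 / 4) / √(1 - c)) c := by
  have hc' : 0 < 1 - c := sub_pos.2 hc
  have hsqrt : HasDerivAt (fun x => √(1 - x)) (-1 / (2 * √(1 - c))) c := by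
    simpa [div_eq_mul_inv, mul_comm] using ((hasDerivAt_id c).const_sub 1).sqrt hc'.ne'
  have hpoly : HasDerivAt (fun x : ℝ => x / 2 + x ^ 2 / 4) (1 / 2 + c / 2) c :=
    (((hasDerivAt_id' c).div_const 2).add ((hasDerivAt_pow 2 c).div_const 4)).congr_deriv
      (by push_cast; ring)
  refine ((hsqrt.mul hpoly.exp).const_mul (-2)).congr_deriv ?_
  have hsq := sq_sqrt hc'.le
  field_simp
  linear_combination (-(1 + c)) * hsq

theorem intervalIntegrable_sq_mul_exp_div_sqrt_one_sub :
    IntervalIntegrable (fun c => c ^ 2 * exp (c / 2 + c ^ 2 / 4) / √(1 - c)) volume 0 1 :=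
  (intervalIntegrable_iff_integrableOn_Ioc_of_le zero_le_one).2 <|
    intervalIntegral.integrableOn_deriv_of_nonneg
      (by fun_prop : Continuous fun x => -2 * (√(1 - x) * exp (x / 2 + x ^ 2 / 4))).continuousOn
      (fun x hx => hasDerivAt_sqrt_one_sub_mul_exp hx.2) fun x _ => by positivity

theorem integral_sq_mul_exp_div_sqrt_one_sub :
    ∫ c in (0 : ℝ)..1, c ^ 2 * exp (c / 2 + c ^ 2 / 4) / √(1 - c) = 2 := by
  rw [intervalIntegral.integral_eq_sub_of_hasDerivAt_of_le zero_le_one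
    (by fun_prop : Continuous fun x => -2 * (√(1 - x) * exp (x / 2 + x ^ 2 / 4))).continuousOn
    (fun x hx => hasDerivAt_sqrt_one_sub_mul_exp hx.2)
    intervalIntegrable_sq_mul_exp_div_sqrt_one_sub]
  norm_num

theorem hasSum_qLen_add_three : HasSum (fun k => qLen (k + 3)) 1 := by
  have h := hasSum_powMoment_sqrt_one_sub_mul (f := fun c => c ^ 2 * exp (c / 2 + c ^ 2 / 4))
    (by fun_prop) intervalIntegrable_sq_mul_exp_div_sqrt_one_sub
  rw [integral_sq_mul_exp_div_sqrt_one_sub] at h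
  rw [show (1 : ℝ) = 2 / 2 by norm_num]
  refine (h.div_const 2).congr_fun fun k => ?_
  rw [qLen_add_one, powMoment, powMoment]
  congr 1
  refine intervalIntegral.integral_congr fun c _ => ?_
  ring

/-- `q_k = (1+o(1))·(e^{3/4}√π/4)·k^{−3/2}` as `k → ∞`, and `Σ_{k≥3} q_k = 1`. -/
theorem qLen_asymp_and_sum :
    Tendsto (fun k : ℕ =>
        qLen k / (Real.exp (3 / 4) * Real.sqrt π / 4 * (k : ℝ) ^ (-(3 / 2) : ℝ)))
      atTop (nhds 1) ∧
    ∑' k : ℕ, qLen (k + 3) = 1 :=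
  ⟨tendsto_qLen_div, hasSum_qLen_add_three.tsum_eq⟩
end
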